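/- Suppose λ is a complex number with λ ≠ 0 and λ³ ≠ −1, and z = (x, λ⁻¹x, λ⁻²x, λ⁻³x) is a vector (with x indexed by the directed edges of G) satisfying Mz = λz. Define a complex vector ψ indexed by the length-2 directed paths of G by: ψ_{(i,j,k)} = (λ²x_{(j,k)} − λx_{(k,i)} + x_{(i,j)})/(λ³ + 1) if i and k are adjacent, and ψ_{(i,j,k)} = λ⁻¹x_{(j,k)} if i and k are not adjacent. Then B^(2)ψ = λψ. -/

import Mathlib

open Matrix ENNReal

namespace PercNB

variable {V : Type*} [Fintype V] [DecidableEq V]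

/-- `p : Fin (g+1) → V` is a length-`g` directed path in the simple graph `G`:
`g+1` pairwise distinct vertices with consecutive vertices adjacent. -/
def IsDiPath (G : SimpleGraph V) (g : ℕ) (p : Fin (g+1) → V) : Prop :=
  Function.Injective p ∧ ∀ k : Fin g, G.Adj (p k.castSucc) (p k.succ)

instance (G : SimpleGraph V) [DecidableRel G.Adj] (g : ℕ) :
    DecidablePred (IsDiPath G g) := fun p =>
  inferInstanceAs (Decidable (Function.Injective p ∧ ∀ k : Fin g, G.Adj (p k.castSucc) (p k.succ)))

/-- The type of length-`g` directed paths of `G`. -/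
abbrev DiPath (G : SimpleGraph V) (g : ℕ) := {p : Fin (g+1) → V // IsDiPath G g p}

/-- The `g`-th-order non-backtracking matrix `B^(g)` of `G`, indexed by the length-`g`
directed paths of `G`: the `(p, q)` entry is `1` if `q k = p (k+1)` for `1 ≤ k ≤ g` and
`(p 1, …, p (g+1), q (g+1))` is a length-`(g+1)` directed path, and `0` otherwise. -/
def NBM (G : SimpleGraph V) [DecidableRel G.Adj] (g : ℕ) :
    Matrix (DiPath G g) (DiPath G g) ℂ := fun p q =>
  if (∀ k : Fin g, q.1 k.castSucc = p.1 k.succ) ∧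
      IsDiPath G (g+1) (Fin.snoc p.1 (q.1 (Fin.last g))) then 1 else 0

/-- The spectral radius of a finite square complex matrix:
the maximum modulus of its eigenvalues (`0` if the index type is empty). -/
noncomputable def specRad {n : Type*} [Fintype n] [DecidableEq n] (X : Matrix n n ℂ) : ℝ≥0∞ :=
  spectralRadius ℂ X

/-- `c : Fin k → V` is a simple cycle of length `k ≥ 3` in `G`: pairwise distinct vertices
with `c t` adjacent to `c (t+1)` for `1 ≤ t ≤ k-1` and `c k` adjacent to `c 1`. -/
def IsSimpleCycle (G : SimpleGraph V) (k : ℕ) (c : Fin k → V) : Prop :=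
  3 ≤ k ∧ Function.Injective c ∧
    ∀ t : Fin k, G.Adj (c t) (c ⟨(t.val + 1) % k, Nat.mod_lt _ t.pos⟩)

/-- The arc relation of the digraph `G^(g)` on the length-`g` directed paths of `G`:
`p → q` exactly when `B^(g)_{p,q} = 1`. -/
def NBArc (G : SimpleGraph V) (g : ℕ) (p q : DiPath G g) : Prop :=
  (∀ k : Fin g, q.1 k.castSucc = p.1 k.succ) ∧
    IsDiPath G (g+1) (Fin.snoc p.1 (q.1 (Fin.last g)))

/-- The arc relation of the line digraph `L(G^(g-1))` (for `g ≥ 1`), under the identification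
of its vertices — the arcs `(i₁,…,i_g) → (i₂,…,i_{g+1})` of `G^(g-1)` — with the length-`g`
directed paths `(i₁,…,i_{g+1})` of `G`: there is an arc `p → q` exactly when the arc
corresponding to `p` ends at the tail of the arc corresponding to `q`, i.e. when
`q k = p (k+1)` for `1 ≤ k ≤ g`. -/
def LineArc (G : SimpleGraph V) (g : ℕ) (p q : DiPath G g) : Prop :=
  ∀ k : Fin g, q.1 k.castSucc = p.1 k.succ

/-- `c : Fin k → α` is a directed cycle of length `k` with respect to the arc relation `r`:
`k` pairwise distinct vertices with an arc from each to the cyclically next one. -/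
def IsDiCycle {α : Type*} (r : α → α → Prop) (k : ℕ) (c : Fin k → α) : Prop :=
  Function.Injective c ∧ ∀ t : Fin k, r (c t) (c ⟨(t.val + 1) % k, Nat.mod_lt _ t.pos⟩)

/-- The type of directed edges of `G`: ordered pairs of adjacent vertices. -/
abbrev DiEdge (G : SimpleGraph V) := {e : V × V // G.Adj e.1 e.2}

/-- The standard non-backtracking matrix `B = B^(1)`, indexed by directed edges:
`B_{(i,j),(k,l)} = 1` iff `j = k`, `l ≠ i` and `j` is adjacent to `l`. -/
def Bmat (G : SimpleGraph V) [DecidableRel G.Adj] : Matrix (DiEdge G) (DiEdge G) ℂ :=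
  fun e f => if e.1.2 = f.1.1 ∧ f.1.2 ≠ e.1.1 ∧ G.Adj e.1.2 f.1.2 then 1 else 0

/-- `(ΔB₁)_{(i,j),(k,l)} = 1` iff `B_{(i,j),(k,l)} = 1` and `i` is adjacent to `l`. -/
def dB1 (G : SimpleGraph V) [DecidableRel G.Adj] : Matrix (DiEdge G) (DiEdge G) ℂ :=
  fun e f => if (e.1.2 = f.1.1 ∧ f.1.2 ≠ e.1.1 ∧ G.Adj e.1.2 f.1.2) ∧ G.Adj e.1.1 f.1.2
    then 1 else 0

/-- `(ΔB₂)_{(i,j),(k,l)} = 1` iff `l = i` and `j` is adjacent to `k`. -/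
def dB2 (G : SimpleGraph V) [DecidableRel G.Adj] : Matrix (DiEdge G) (DiEdge G) ℂ :=
  fun e f => if f.1.2 = e.1.1 ∧ G.Adj e.1.2 f.1.1 then 1 else 0

/-- The diagonal matrix `D_Δ` whose `((i,j),(i,j))` entry is the number of common
neighbours of `i` and `j`. -/
noncomputable def Ddel (G : SimpleGraph V) [DecidableRel G.Adj] :
    Matrix (DiEdge G) (DiEdge G) ℂ :=
  Matrix.diagonal fun e =>
    ((Finset.univ.filter fun v => G.Adj e.1.1 v ∧ G.Adj e.1.2 v).card : ℂ)

/-- The `8E × 8E` block matrix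
`M = [[B, −ΔB₂, D_Δ − I, B − ΔB₁], [I, 0, 0, 0], [0, I, 0, 0], [0, 0, I, 0]]`. -/
noncomputable def Mmat (G : SimpleGraph V) [DecidableRel G.Adj] :
    Matrix ((DiEdge G ⊕ DiEdge G) ⊕ (DiEdge G ⊕ DiEdge G))
      ((DiEdge G ⊕ DiEdge G) ⊕ (DiEdge G ⊕ DiEdge G)) ℂ :=
  Matrix.fromBlocks
    (Matrix.fromBlocks (Bmat G) (-(dB2 G)) 1 0)
    (Matrix.fromBlocks (Ddel G - 1) (Bmat G - dB1 G) 0 0)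
    (Matrix.fromBlocks 0 1 0 0)
    (Matrix.fromBlocks 0 0 1 0)

/-- `x_{(i,j)} = Σ_k ψ_{(i,j,k)}`, the sum over all vertices `k` adjacent to `j` with
`k ≠ i`; equivalently, the sum of `ψ` over all length-2 directed paths starting `(i,j,·)`. -/
noncomputable def xvec (G : SimpleGraph V) [DecidableRel G.Adj] (ψ : DiPath G 2 → ℂ) :
    DiEdge G → ℂ := fun e =>
  ∑ p ∈ Finset.univ.filter (fun p : DiPath G 2 => p.1 0 = e.1.1 ∧ p.1 1 = e.1.2), ψ p

/-- `y_{(i,j)} = Σ_k ψ_{(i,j,k)}`, the sum over all vertices `k` adjacent to both `i`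
and `j`. -/
noncomputable def yvec (G : SimpleGraph V) [DecidableRel G.Adj] (ψ : DiPath G 2 → ℂ) :
    DiEdge G → ℂ := fun e =>
  ∑ p ∈ Finset.univ.filter
    (fun p : DiPath G 2 => p.1 0 = e.1.1 ∧ p.1 1 = e.1.2 ∧ G.Adj e.1.1 (p.1 2)), ψ p

/-- The block vector `z = (x, λ⁻¹x, λ⁻²x, λ⁻³x)`. -/
noncomputable def blockVec {G : SimpleGraph V} (lam : ℂ) (x : DiEdge G → ℂ) :
    (DiEdge G ⊕ DiEdge G) ⊕ (DiEdge G ⊕ DiEdge G) → ℂ :=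
  Sum.elim (Sum.elim x (lam⁻¹ • x)) (Sum.elim ((lam ^ 2)⁻¹ • x) ((lam ^ 3)⁻¹ • x))

/-- The vector `ψ` built from `x`:
`ψ_{(i,j,k)} = (λ²x_{(j,k)} − λx_{(k,i)} + x_{(i,j)})/(λ³+1)` if `i` and `k` are adjacent,
and `ψ_{(i,j,k)} = λ⁻¹ x_{(j,k)}` if `i` and `k` are not adjacent. -/
noncomputable def psiOf (G : SimpleGraph V) [DecidableRel G.Adj] (lam : ℂ)
    (x : DiEdge G → ℂ) : DiPath G 2 → ℂ := fun p =>
  if h : G.Adj (p.1 0) (p.1 2) then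
    (lam ^ 2 * x ⟨(p.1 1, p.1 2), by simpa using p.2.2 1⟩
      - lam * x ⟨(p.1 2, p.1 0), h.symm⟩
      + x ⟨(p.1 0, p.1 1), by simpa using p.2.2 0⟩) / (lam ^ 3 + 1)
  else lam⁻¹ * x ⟨(p.1 1, p.1 2), by simpa using p.2.2 1⟩

/-! Only the top block row of `Mz = λz` carries information; cleared of denominators it reads
`λ³Bx − λ²ΔB₂x + λ(D_Δ − I)x + (B − ΔB₁)x = λ⁴x`. Summing `ψ_{(i,j,k)}` over the continuations
`k` of a directed edge `(i,j)`, and splitting according to whether `i ∼ k`, gives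
`λ(λ³+1) Σ_k ψ_{(i,j,k)} = (λ³Bx − λ²ΔB₂x + λD_Δx + (B − ΔB₁)x)_{(i,j)}`, so by the top row
these row sums of `ψ` are exactly `x`. On the other hand `(B^(2)ψ)_{(i,j,k)}` is the row sum of
`ψ` at `(j,k)` minus the backtracking term `ψ_{(j,k,i)}`, present only when `i ∼ k`; hence it
equals `x_{(j,k)} − [i ∼ k] ψ_{(j,k,i)}`, which is `λψ_{(i,j,k)}` by the definition of `ψ`. -/

theorem _root_.Fintype.sum_subtype_of_not_imp_eq_zero {ι M : Type*} [Fintype ι] [AddCommMonoid M]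
    {p : ι → Prop} [DecidablePred p] (f : ι → M) (hf : ∀ i, ¬p i → f i = 0) :
    ∑ i : Subtype p, f i = ∑ i, f i := by
  rw [← Finset.sum_subtype (Finset.univ.filter p) (by simp), Finset.sum_filter_of_ne]
  exact fun i _ hi => by_contra fun h => hi (hf i h)

theorem _root_.Fintype.sum_fin_three_pi {α M : Type*} [Fintype α] [AddCommMonoid M]
    (H : (Fin 3 → α) → M) : ∑ v, H v = ∑ a, ∑ b, ∑ c, H ![a, b, c] := by
  simp only [← (Fin.consEquiv fun _ => α).sum_comp, Fintype.sum_prod_type, Fintype.sum_unique]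
  rfl

theorem _root_.Fintype.sum_ite_fin_three_pi {α M : Type*} [Fintype α] [DecidableEq α]
    [AddCommMonoid M] (a b : α) (H : (Fin 3 → α) → M) :
    ∑ v : Fin 3 → α, (if v 0 = a ∧ v 1 = b then H v else 0) = ∑ c, H ![a, b, c] := by
  rw [Fintype.sum_fin_three_pi, Fintype.sum_eq_single a fun a' ha => ?_,
    Fintype.sum_eq_single b fun b' hb => ?_]
  · simp
  · simp [hb]
  · simp [ha]

section ExtensionByZero

variable {G : SimpleGraph V} [DecidableRel G.Adj]

def edgeExt (x : DiEdge G → ℂ) (a b : V) : ℂ :=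
  if h : G.Adj a b then x ⟨(a, b), h⟩ else 0

def pathExt {g : ℕ} (ψ : DiPath G g → ℂ) (v : Fin (g + 1) → V) : ℂ :=
  if h : IsDiPath G g v then ψ ⟨v, h⟩ else 0

omit [Fintype V] [DecidableEq V] in
theorem edgeExt_of_adj (x : DiEdge G → ℂ) {a b : V} (h : G.Adj a b) :
    edgeExt x a b = x ⟨(a, b), h⟩ :=
  dif_pos h

omit [Fintype V] [DecidableEq V] in
theorem edgeExt_of_not_adj (x : DiEdge G → ℂ) {a b : V} (h : ¬G.Adj a b) :
    edgeExt x a b = 0 :=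
  dif_neg h

omit [Fintype V] [DecidableEq V] in
@[simp]
theorem ite_adj_edgeExt (x : DiEdge G → ℂ) (a b : V) :
    (if G.Adj a b then edgeExt x a b else 0) = edgeExt x a b :=
  ite_eq_left_iff.2 fun h => (edgeExt_of_not_adj x h).symm

omit [Fintype V] in
theorem pathExt_val {g : ℕ} (ψ : DiPath G g → ℂ) (q : DiPath G g) : pathExt ψ q.1 = ψ q :=
  dif_pos q.2

omit [DecidableEq V] in
theorem sum_diEdge_mul (F : V × V → ℂ) (x : DiEdge G → ℂ) :
    ∑ f : DiEdge G, F f.1 * x f = ∑ a, ∑ b, F (a, b) * edgeExt x a b := by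
  rw [← Fintype.sum_prod_type' (fun a b => F (a, b) * edgeExt x a b),
    ← Fintype.sum_subtype_of_not_imp_eq_zero (p := fun e : V × V => G.Adj e.1 e.2)]
  · exact Fintype.sum_congr _ _ fun f => by rw [edgeExt_of_adj x f.2]
  · intro e he
    rw [edgeExt_of_not_adj x he, mul_zero]

theorem sum_diPath_mul {g : ℕ} (F : (Fin (g + 1) → V) → ℂ) (ψ : DiPath G g → ℂ) :
    ∑ q : DiPath G g, F q.1 * ψ q = ∑ v, F v * pathExt ψ v := by
  rw [← Fintype.sum_subtype_of_not_imp_eq_zero (p := IsDiPath G g)]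
  · exact Fintype.sum_congr _ _ fun q => by rw [pathExt_val]
  · intro v hv
    rw [pathExt, dif_neg hv, mul_zero]

end ExtensionByZero

section Paths

variable {G : SimpleGraph V}

omit [Fintype V] [DecidableEq V] in
theorem isDiPath_two_iff {v : Fin 3 → V} :
    IsDiPath G 2 v ↔ G.Adj (v 0) (v 1) ∧ G.Adj (v 1) (v 2) ∧ v 0 ≠ v 2 := by
  have h01 : G.Adj (v 0) (v 1) → v 0 ≠ v 1 := G.ne_of_adj
  have h12 : G.Adj (v 1) (v 2) → v 1 ≠ v 2 := G.ne_of_adj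
  simp [IsDiPath, Function.Injective, Fin.forall_fin_succ]
  grind

omit [Fintype V] [DecidableEq V] in
theorem isDiPath_snoc_iff {g : ℕ} (p : Fin (g + 1) → V) (c : V) :
    IsDiPath G (g + 1) (Fin.snoc p c) ↔
      IsDiPath G g p ∧ c ∉ Set.range p ∧ G.Adj (p (Fin.last g)) c := by
  simp only [IsDiPath, Fin.snoc_injective_iff, Fin.forall_fin_succ' (n := g), Fin.snoc_castSucc,
    Fin.succ_castSucc, Fin.succ_last, Fin.snoc_last]
  tauto

end Paths

section RowSums

variable {G : SimpleGraph V} [DecidableRel G.Adj] (x : DiEdge G → ℂ) (e : DiEdge G)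

theorem Bmat_mulVec_apply :
    (Bmat G *ᵥ x) e = ∑ c, if c ≠ e.1.1 then edgeExt x e.1.2 c else 0 := by
  refine (sum_diEdge_mul
    (fun f => if e.1.2 = f.1 ∧ f.2 ≠ e.1.1 ∧ G.Adj e.1.2 f.2 then 1 else 0) x).trans ?_
  simp [ite_and]

theorem dB1_mulVec_apply :
    (dB1 G *ᵥ x) e = ∑ c, if G.Adj e.1.1 c then edgeExt x e.1.2 c else 0 := by
  refine (sum_diEdge_mul (fun f =>
    if (e.1.2 = f.1 ∧ f.2 ≠ e.1.1 ∧ G.Adj e.1.2 f.2) ∧ G.Adj e.1.1 f.2 then 1 else 0) x).trans ?_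
  simp only [ne_eq, ite_and, ite_not, ite_mul, zero_mul, one_mul, Finset.sum_ite_irrel,
    Finset.sum_const_zero, Finset.sum_ite_eq, Finset.mem_univ, ↓reduceIte]
  refine Fintype.sum_congr _ _ fun c => ?_
  by_cases h : c = e.1.1
  · simp [h]
  · simp +contextual [h, edgeExt_of_not_adj]

theorem dB2_mulVec_apply :
    (dB2 G *ᵥ x) e = ∑ c, if G.Adj e.1.2 c then edgeExt x c e.1.1 else 0 := by
  refine (sum_diEdge_mul (fun f => if f.2 = e.1.1 ∧ G.Adj e.1.2 f.1 then 1 else 0) x).trans ?_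
  simp [ite_and]

theorem Ddel_mulVec_apply :
    (Ddel G *ᵥ x) e = ∑ c, if G.Adj e.1.1 c ∧ G.Adj e.1.2 c then x e else 0 := by
  rw [Ddel, mulVec_diagonal, Finset.sum_ite, Finset.sum_const_zero, add_zero, Finset.sum_const,
    nsmul_eq_mul]

theorem xvec_apply (ψ : DiPath G 2 → ℂ) :
    xvec G ψ e = ∑ c, pathExt ψ ![e.1.1, e.1.2, c] := by
  rw [xvec, Finset.sum_filter]
  refine (Fintype.sum_congr _ _ fun q => (boole_mul _ _).symm).trans
    ((sum_diPath_mul (fun v => if v 0 = e.1.1 ∧ v 1 = e.1.2 then 1 else 0) ψ).trans ?_)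
  simp only [boole_mul]
  exact Fintype.sum_ite_fin_three_pi _ _ _

omit [Fintype V] in
theorem NBM_two_apply (p q : DiPath G 2) :
    NBM G 2 p q = if q.1 0 = p.1 1 ∧ q.1 1 = p.1 2 ∧ q.1 2 ≠ p.1 0 then 1 else 0 := by
  obtain ⟨-, hq12, hq02⟩ := isDiPath_two_iff.1 q.2
  simp only [NBM, Fin.forall_fin_two, isDiPath_snoc_iff, p.2, true_and]
  refine if_congr ⟨?_, ?_⟩ rfl rfl
  · rintro ⟨⟨h0, h1⟩, hr, -⟩
    exact ⟨h0, h1, fun h => hr ⟨0, h.symm⟩⟩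
  · rintro ⟨h0, h1, h2⟩
    refine ⟨⟨h0, h1⟩, ?_, h1 ▸ hq12⟩
    rintro ⟨i, hi⟩
    fin_cases i
    · exact h2 hi.symm
    · exact hq02 (h0.trans hi)
    · exact hq12.ne (h1.trans hi)

theorem NBM_two_mulVec_apply (ψ : DiPath G 2 → ℂ) (p : DiPath G 2) :
    (NBM G 2 *ᵥ ψ) p =
      xvec G ψ ⟨(p.1 1, p.1 2), p.2.2 1⟩ - pathExt ψ ![p.1 1, p.1 2, p.1 0] := by
  simp only [mulVec, dotProduct, NBM_two_apply]
  rw [sum_diPath_mul (fun v => if v 0 = p.1 1 ∧ v 1 = p.1 2 ∧ v 2 ≠ p.1 0 then 1 else 0),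
    xvec_apply, ← Finset.sum_erase_eq_sub (Finset.mem_univ _), ← Finset.filter_ne',
    Finset.sum_filter]
  refine (Fintype.sum_congr _ _ fun v => ?_).trans
    (Fintype.sum_ite_fin_three_pi (p.1 1) (p.1 2) fun v => if v 2 ≠ p.1 0 then pathExt ψ v else 0)
  · split_ifs <;> simp_all

end RowSums

section Eigenvector

variable {G : SimpleGraph V} [DecidableRel G.Adj] {lam : ℂ} {x : DiEdge G → ℂ}

theorem top_block_of_Mmat_eigen (hz : Mmat G *ᵥ blockVec lam x = lam • blockVec lam x) :
    Bmat G *ᵥ x - lam⁻¹ • (dB2 G *ᵥ x) + (lam ^ 2)⁻¹ • (Ddel G *ᵥ x - x)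
      + (lam ^ 3)⁻¹ • (Bmat G *ᵥ x - dB1 G *ᵥ x) = lam • x := by
  funext e
  have h := congrFun hz (Sum.inl (Sum.inl e))
  simp only [Mmat, blockVec, fromBlocks_mulVec, Sum.elim_inl, Pi.add_apply,
    mulVec_smul, sub_mulVec, neg_mulVec, one_mulVec, Pi.smul_apply, Pi.sub_apply,
    Pi.neg_apply, smul_eq_mul, Sum.elim_comp_inl, Sum.elim_comp_inr] at h ⊢
  linear_combination h

omit [Fintype V] in
theorem pathExt_psiOf {a b : V} (hab : G.Adj a b) (c : V) :
    pathExt (psiOf G lam x) ![a, b, c] =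
      if G.Adj b c ∧ a ≠ c then
        if G.Adj a c then
          (lam ^ 2 * edgeExt x b c - lam * edgeExt x c a + edgeExt x a b) / (lam ^ 3 + 1)
        else lam⁻¹ * edgeExt x b c
      else 0 := by
  by_cases h : G.Adj b c ∧ a ≠ c
  · have hp : IsDiPath G 2 ![a, b, c] := isDiPath_two_iff.2 ⟨hab, h⟩
    rw [pathExt, dif_pos hp, if_pos h]
    by_cases hac : G.Adj a c
    · simp [psiOf, hac, edgeExt_of_adj x hab, edgeExt_of_adj x h.1, edgeExt_of_adj x hac.symm]
    · simp [psiOf, hac, edgeExt_of_adj x h.1]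
  · rw [pathExt, dif_neg (fun hp => h (isDiPath_two_iff.1 hp).2), if_neg h]

omit [Fintype V] in
theorem mul_pathExt_psiOf (h0 : lam ≠ 0) (h3 : lam ^ 3 + 1 ≠ 0) (e : DiEdge G) (c : V) :
    lam * (lam ^ 3 + 1) * pathExt (psiOf G lam x) ![e.1.1, e.1.2, c] =
      lam ^ 3 * (if c ≠ e.1.1 then edgeExt x e.1.2 c else 0)
        - lam ^ 2 * (if G.Adj e.1.2 c then edgeExt x c e.1.1 else 0)
        + lam * (if G.Adj e.1.1 c ∧ G.Adj e.1.2 c then x e else 0)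
        + ((if c ≠ e.1.1 then edgeExt x e.1.2 c else 0)
          - if G.Adj e.1.1 c then edgeExt x e.1.2 c else 0) := by
  obtain ⟨⟨a, b⟩, hab⟩ := e
  dsimp only
  rw [pathExt_psiOf hab]
  by_cases hbc : G.Adj b c
  · by_cases hca : c = a
    · subst hca
      simp [edgeExt_of_not_adj x (G.irrefl (v := c))]
    · by_cases hac : G.Adj a c
      · simp [hbc, hca, Ne.symm hca, hac, edgeExt_of_adj x hab]
        field_simp
      · simp [hbc, hca, Ne.symm hca, hac, edgeExt_of_not_adj x (fun h => hac h.symm)]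
        field_simp
  · simp [hbc, edgeExt_of_not_adj x hbc]

theorem smul_xvec_psiOf (h0 : lam ≠ 0) (h3 : lam ^ 3 + 1 ≠ 0) :
    (lam * (lam ^ 3 + 1)) • xvec G (psiOf G lam x) =
      lam ^ 3 • (Bmat G *ᵥ x) - lam ^ 2 • (dB2 G *ᵥ x) + lam • (Ddel G *ᵥ x)
        + (Bmat G *ᵥ x - dB1 G *ᵥ x) := by
  funext e
  simp only [Pi.smul_apply, Pi.add_apply, Pi.sub_apply, smul_eq_mul, xvec_apply,
    Bmat_mulVec_apply, dB1_mulVec_apply, dB2_mulVec_apply, Ddel_mulVec_apply, Finset.mul_sum,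
    mul_pathExt_psiOf h0 h3, ← Finset.sum_sub_distrib, ← Finset.sum_add_distrib]

theorem xvec_psiOf (h0 : lam ≠ 0) (h3 : lam ^ 3 + 1 ≠ 0)
    (hz : Mmat G *ᵥ blockVec lam x = lam • blockVec lam x) :
    xvec G (psiOf G lam x) = x := by
  have hrow := smul_xvec_psiOf (x := x) h0 h3
  have htop := top_block_of_Mmat_eigen hz
  funext e
  have hrow_e := congrFun hrow e
  have htop_e := congrFun htop e
  simp only [Pi.smul_apply, Pi.add_apply, Pi.sub_apply, smul_eq_mul] at hrow_e htop_e
  apply mul_left_cancel₀ (mul_ne_zero h0 h3)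
  field_simp at htop_e
  linear_combination hrow_e + htop_e

end Eigenvector

/-- If `λ ≠ 0`, `λ³ ≠ -1` and `z = (x, λ⁻¹x, λ⁻²x, λ⁻³x)` satisfies `Mz = λz`, then the
vector `ψ` defined by `ψ_{(i,j,k)} = (λ²x_{(j,k)} − λx_{(k,i)} + x_{(i,j)})/(λ³+1)` when `i`
and `k` are adjacent and `ψ_{(i,j,k)} = λ⁻¹x_{(j,k)}` otherwise satisfies `B^(2)ψ = λψ`. -/
theorem nbm_eigen_of_M_eigen (G : SimpleGraph V) [DecidableRel G.Adj]
    (lam : ℂ) (h0 : lam ≠ 0) (h3 : lam ^ 3 ≠ -1) (x : DiEdge G → ℂ)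
    (hz : (Mmat G) *ᵥ blockVec lam x = lam • blockVec lam x) :
    (NBM G 2) *ᵥ psiOf G lam x = lam • psiOf G lam x := by
  have h3' : lam ^ 3 + 1 ≠ 0 := fun h => h3 (eq_neg_of_add_eq_zero_left h)
  funext p
  obtain ⟨hij, hjk, hik⟩ := isDiPath_two_iff.1 p.2
  have hp : psiOf G lam x p = pathExt (psiOf G lam x) ![p.1 0, p.1 1, p.1 2] := by
    rw [← pathExt_val (psiOf G lam x) p]
    congr
    funext i
    fin_cases i <;> rfl
  rw [NBM_two_mulVec_apply, xvec_psiOf h0 h3' hz, Pi.smul_apply, smul_eq_mul, hp,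
    pathExt_psiOf hij, pathExt_psiOf hjk, ← edgeExt_of_adj x hjk]
  by_cases hik_adj : G.Adj (p.1 0) (p.1 2)
  · simp [hik_adj, hik_adj.symm, hjk, hik, hij.ne', hij.symm]
    field_simp
    ring
  · have hki : ¬G.Adj (p.1 2) (p.1 0) := fun h => hik_adj h.symm
    simp [hik_adj, hki, hjk, hik, hij.ne']
    field_simp

end PercNB
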